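/- Let D : ℝⁿ → ℝⁿ be continuously differentiable with a zero y* (D y* = 0). Suppose there exist constants C₁ > 0 and C₂ ≥ 0 such that for all x in a neighborhood of y*, the Jacobian ∇D(x) is invertible with ‖(∇D(x))⁻¹‖ ≤ 1/C₁, and ‖∇D(x) − ∇D(y)‖ ≤ C₂ ‖x − y‖ for all x, y in that neighborhood. Then the Newton iterate y⁺ = y − (∇D(y))⁻¹ D(y) satisfies ‖y⁺ − y*‖ ≤ (C₂ / C₁) ‖y − y*‖² for y sufficiently close to y*. -/

import Mathlib

/-!
Apply `J y` to the first-order Taylor remainder of `D` at `y`, evaluated at the root: since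
`J y` is a left inverse of `∇D(y)` and `D y* = 0`, this gives exactly the Newton error
`y⁺ - y*`. The mean value inequality applied to `z ↦ D z - ∇D(y) z` on the segment `[y, y*]`,
where the Lipschitz bound gives `‖∇D(z) - ∇D(y)‖ ≤ C₂ ‖y - y*‖`, bounds the remainder by
`C₂ ‖y - y*‖²`, and `‖J y‖ ≤ 1 / C₁` finishes.
-/

open Metric

section

variable {E F : Type*} [NormedAddCommGroup E] [NormedSpace ℝ E]
  [NormedAddCommGroup F] [NormedSpace ℝ F]

theorem Convex.norm_image_sub_sub_fderiv_le_of_lipschitz_fderiv {f : E → F} {s : Set E}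
    (hs : Convex ℝ s) (hf : ∀ x ∈ s, DifferentiableAt ℝ f x) {C : ℝ} (hC : 0 ≤ C)
    (hlip : ∀ x ∈ s, ∀ y ∈ s, ‖fderiv ℝ f x - fderiv ℝ f y‖ ≤ C * ‖x - y‖)
    {x y : E} (hx : x ∈ s) (hy : y ∈ s) :
    ‖f y - f x - fderiv ℝ f x (y - x)‖ ≤ C * ‖y - x‖ ^ 2 := by
  have hseg : segment ℝ x y ⊆ s := hs.segment_subset hx hy
  have hderiv : ∀ z ∈ segment ℝ x y, HasFDerivWithinAt (fun w => f w - fderiv ℝ f x w)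
      (fderiv ℝ f z - fderiv ℝ f x) (segment ℝ x y) z := fun z hz =>
    ((hf z (hseg hz)).hasFDerivAt.sub (fderiv ℝ f x).hasFDerivAt).hasFDerivWithinAt
  have hbound : ∀ z ∈ segment ℝ x y, ‖fderiv ℝ f z - fderiv ℝ f x‖ ≤ C * ‖y - x‖ := fun z hz =>
    (hlip z (hseg hz) x hx).trans (by gcongr; exact norm_sub_le_of_mem_segment hz)
  have := (convex_segment x y).norm_image_sub_le_of_norm_hasFDerivWithin_le hderiv hbound
    (left_mem_segment ℝ x y) (right_mem_segment ℝ x y)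
  rw [map_sub, sq, ← mul_assoc]
  convert this using 2
  abel

theorem sub_leftInverse_apply_sub_eq_of_apply_eq_zero {f : E → F} {L : E →L[ℝ] F}
    {J : F →L[ℝ] E} (hJ : J.comp L = ContinuousLinearMap.id ℝ E) {z : E} (hz : f z = 0)
    (x : E) : x - J (f x) - z = J (f z - f x - L (z - x)) := by
  have hJL : J (L (z - x)) = z - x := by rw [← ContinuousLinearMap.comp_apply, hJ]; rfl
  rw [map_sub, map_sub, hJL, hz, map_zero]
  abel

end

theorem newton_raphson_quadratic_convergence_general
    {n : ℕ} (D : EuclideanSpace ℝ (Fin n) → EuclideanSpace ℝ (Fin n))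
    (ystar : EuclideanSpace ℝ (Fin n))
    (hD : ContDiff ℝ 1 D) (hroot : D ystar = 0)
    (U : Set (EuclideanSpace ℝ (Fin n))) (hU : U ∈ nhds ystar)
    (C₁ C₂ : ℝ) (hC₂ : 0 ≤ C₂)
    (J : EuclideanSpace ℝ (Fin n) →
         (EuclideanSpace ℝ (Fin n) →L[ℝ] EuclideanSpace ℝ (Fin n)))
    (hJ₂ : ∀ x ∈ U, (J x).comp (fderiv ℝ D x) = ContinuousLinearMap.id ℝ _)
    (hJnorm : ∀ x ∈ U, ‖J x‖ ≤ 1 / C₁)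
    (hLip : ∀ x ∈ U, ∀ y ∈ U, ‖fderiv ℝ D x - fderiv ℝ D y‖ ≤ C₂ * ‖x - y‖) :
    ∃ δ > 0, ∀ y : EuclideanSpace ℝ (Fin n), ‖y - ystar‖ < δ →
      ‖(y - J y (D y)) - ystar‖ ≤ (C₂ / C₁) * ‖y - ystar‖ ^ 2 := by
  obtain ⟨δ, hδ, hball⟩ := Metric.mem_nhds_iff.mp hU
  refine ⟨δ, hδ, fun y hy => ?_⟩
  have hyU : y ∈ U := hball (mem_ball_iff_norm.mpr hy)
  have hremainder : ‖D ystar - D y - fderiv ℝ D y (ystar - y)‖ ≤ C₂ * ‖ystar - y‖ ^ 2 :=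
    (convex_ball ystar δ).norm_image_sub_sub_fderiv_le_of_lipschitz_fderiv
      (fun x _ => hD.differentiable one_ne_zero x) hC₂
      (fun x hx z hz => hLip x (hball hx) z (hball hz))
      (mem_ball_iff_norm.mpr hy) (mem_ball_self hδ)
  rw [norm_sub_rev ystar y] at hremainder
  rw [sub_leftInverse_apply_sub_eq_of_apply_eq_zero (hJ₂ y hyU) hroot]
  calc ‖J y (D ystar - D y - fderiv ℝ D y (ystar - y))‖
      ≤ ‖J y‖ * ‖D ystar - D y - fderiv ℝ D y (ystar - y)‖ := (J y).le_opNorm _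
    _ ≤ (1 / C₁) * (C₂ * ‖y - ystar‖ ^ 2) :=
        mul_le_mul (hJnorm y hyU) hremainder (norm_nonneg _)
          ((norm_nonneg _).trans (hJnorm y hyU))
    _ = (C₂ / C₁) * ‖y - ystar‖ ^ 2 := by ring

theorem newton_raphson_quadratic_convergence
    {n : ℕ} (D : EuclideanSpace ℝ (Fin n) → EuclideanSpace ℝ (Fin n))
    (ystar : EuclideanSpace ℝ (Fin n))
    (hD : ContDiff ℝ 1 D) (hroot : D ystar = 0)
    (U : Set (EuclideanSpace ℝ (Fin n))) (hU : U ∈ nhds ystar)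
    (C₁ C₂ : ℝ) (hC₁ : 0 < C₁) (hC₂ : 0 ≤ C₂)
    (J : EuclideanSpace ℝ (Fin n) →
         (EuclideanSpace ℝ (Fin n) →L[ℝ] EuclideanSpace ℝ (Fin n)))
    (hJ₁ : ∀ x ∈ U, (fderiv ℝ D x).comp (J x) = ContinuousLinearMap.id ℝ _)
    (hJ₂ : ∀ x ∈ U, (J x).comp (fderiv ℝ D x) = ContinuousLinearMap.id ℝ _)
    (hJnorm : ∀ x ∈ U, ‖J x‖ ≤ 1 / C₁)
    (hLip : ∀ x ∈ U, ∀ y ∈ U, ‖fderiv ℝ D x - fderiv ℝ D y‖ ≤ C₂ * ‖x - y‖) :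
    ∃ δ > 0, ∀ y : EuclideanSpace ℝ (Fin n), ‖y - ystar‖ < δ →
      ‖(y - J y (D y)) - ystar‖ ≤ (C₂ / C₁) * ‖y - ystar‖ ^ 2 :=
  newton_raphson_quadratic_convergence_general D ystar hD hroot U hU C₁ C₂ hC₂ J hJ₂ hJnorm hLip
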